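/- arXiv:1503.03281 — 4 statements merged into one kernel-verified Lean document; each statement's English description precedes it below -/
import Mathlib

section
/- Let L/k be a finite Galois field extension with Galois group G = Gal(L/k) and let n ≥ 1. Suppose ξ : G → GL_n(L) satisfies the cocycle condition ξ(σ·τ) = ξ(σ) · σ(ξ(τ)) for all σ, τ ∈ G, where σ(M) denotes entrywise application of σ to the matrix M. Then there exists η ∈ GL_n(L) such that ξ(σ) = η · σ(η)⁻¹ for all σ ∈ G. -/
/-!
Twist the entrywise Galois action on `L^n` by the cocycle: `σ ⋆ v = ξ σ · σ(v)`. The cocycle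
identity makes this a semilinear action, so the averages `∑ τ, τ c • τ ⋆ v` are fixed. By
Dedekind's independence of characters, a linear form vanishing on all of them vanishes on every
`v`, so the fixed vectors span `L^n`. A matrix `η` whose columns form a basis of fixed vectors
satisfies `ξ σ · σ(η) = η`.
-/

open Matrix

section

variable {k L ι : Type*} [Field k] [Field L] [Algebra k L] [Fintype ι] [DecidableEq ι]

def IsMatrixCocycle (ξ : (L ≃ₐ[k] L) → GL ι L) : Prop :=
  ∀ σ τ : L ≃ₐ[k] L, (ξ (σ * τ) : Matrix ι ι L) = ξ σ * (ξ τ : Matrix ι ι L).map σ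

def twistedSMul (ξ : (L ≃ₐ[k] L) → GL ι L) (σ : L ≃ₐ[k] L) (v : ι → L) : ι → L :=
  (ξ σ : Matrix ι ι L) *ᵥ (σ ∘ v)

def twistedFixedVectors (ξ : (L ≃ₐ[k] L) → GL ι L) : Set (ι → L) :=
  {v | ∀ σ, twistedSMul ξ σ v = v}

variable {ξ : (L ≃ₐ[k] L) → GL ι L}

theorem IsMatrixCocycle.map_one (hξ : IsMatrixCocycle ξ) : ξ 1 = 1 := by
  have h := hξ 1 1
  rw [one_mul, show ⇑(1 : L ≃ₐ[k] L) = id from rfl, Matrix.map_id] at h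
  exact mul_eq_left.mp (Units.ext h.symm)

theorem IsMatrixCocycle.twistedSMul_one (hξ : IsMatrixCocycle ξ) (v : ι → L) :
    twistedSMul ξ 1 v = v := by
  simp [twistedSMul, hξ.map_one, Function.comp_def]

theorem IsMatrixCocycle.twistedSMul_mul (hξ : IsMatrixCocycle ξ) (σ τ : L ≃ₐ[k] L)
    (v : ι → L) : twistedSMul ξ (σ * τ) v = twistedSMul ξ σ (twistedSMul ξ τ v) := by
  have : σ ∘ twistedSMul ξ τ v = (ξ τ : Matrix ι ι L).map σ *ᵥ (σ ∘ τ ∘ v) :=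
    funext (RingHom.map_mulVec (σ : L →+* L) _ _)
  rw [twistedSMul, twistedSMul, this, mulVec_mulVec, ← hξ]
  rfl

theorem twistedSMul_sum_smul {α : Type*} (s : Finset α) (σ : L ≃ₐ[k] L) (c : α → L)
    (v : α → ι → L) :
    twistedSMul ξ σ (∑ a ∈ s, c a • v a) = ∑ a ∈ s, σ (c a) • twistedSMul ξ σ (v a) := by
  have : σ ∘ (∑ a ∈ s, c a • v a) = ∑ a ∈ s, σ (c a) • (σ ∘ v a) := by
    ext i; simp
  simp only [twistedSMul, this, mulVec_sum, mulVec_smul]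

variable [FiniteDimensional k L]

theorem IsMatrixCocycle.sum_smul_twistedSMul_mem_twistedFixedVectors (hξ : IsMatrixCocycle ξ)
    (c : L) (v : ι → L) : ∑ τ, τ c • twistedSMul ξ τ v ∈ twistedFixedVectors ξ := fun σ => by
  rw [twistedSMul_sum_smul]
  simp_rw [← hξ.twistedSMul_mul]
  exact Fintype.sum_equiv (Equiv.mulLeft σ) _ _ fun _ => rfl

theorem AlgEquiv.eq_zero_of_forall_sum_mul_apply_eq_zero {a : (L ≃ₐ[k] L) → L}
    (h : ∀ c, ∑ σ, a σ * σ c = 0) (σ : L ≃ₐ[k] L) : a σ = 0 := by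
  have hind : LinearIndependent L (fun σ : L ≃ₐ[k] L => ((σ : L →* L) : L → L)) :=
    (linearIndependent_monoidHom L L).comp _ fun _ _ h => AlgEquiv.ext (DFunLike.congr_fun h :)
  exact Fintype.linearIndependent_iff.mp hind a (funext fun c => by simpa using h c) σ

theorem IsMatrixCocycle.span_twistedFixedVectors (hξ : IsMatrixCocycle ξ) :
    Submodule.span L (twistedFixedVectors ξ) = ⊤ := by
  refine Submodule.eq_top_iff'.mpr fun v => by_contra fun hv => ?_
  obtain ⟨f, hfv, hf⟩ := Submodule.exists_dual_map_eq_bot_of_notMem hv inferInstance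
  have hf_fixed : ∀ w ∈ twistedFixedVectors ξ, f w = 0 := fun w hw =>
    (Submodule.mem_bot L).mp (hf ▸ Submodule.mem_map_of_mem (Submodule.subset_span hw))
  have hf_twisted : ∀ σ, f (twistedSMul ξ σ v) = 0 :=
    AlgEquiv.eq_zero_of_forall_sum_mul_apply_eq_zero fun c => by
      simpa [map_sum, mul_comm] using
        hf_fixed _ (hξ.sum_smul_twistedSMul_mem_twistedFixedVectors c v)
  exact hfv (by simpa [hξ.twistedSMul_one] using hf_twisted 1)

theorem IsMatrixCocycle.exists_basis_mem_twistedFixedVectors (hξ : IsMatrixCocycle ξ) :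
    ∃ b : Module.Basis ι L (ι → L), ∀ i, b i ∈ twistedFixedVectors ξ := by
  let b := Module.Basis.ofSpan hξ.span_twistedFixedVectors.ge
  refine ⟨b.reindex (b.indexEquiv (Pi.basisFun L ι)), fun i => ?_⟩
  rw [Module.Basis.reindex_apply]
  exact Module.Basis.ofSpan_subset _ (Set.mem_range_self _)

theorem IsMatrixCocycle.exists_mul_map_eq (hξ : IsMatrixCocycle ξ) :
    ∃ η : GL ι L, ∀ σ : L ≃ₐ[k] L, (ξ σ : Matrix ι ι L) * (η : Matrix ι ι L).map σ = η := by
  obtain ⟨b, hb⟩ := hξ.exists_basis_mem_twistedFixedVectors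
  have := (Pi.basisFun L ι).invertibleToMatrix b
  refine ⟨unitOfInvertible ((Pi.basisFun L ι).toMatrix b), fun σ => ?_⟩
  ext i j
  simpa [twistedSMul, Module.Basis.toMatrix_apply, mul_apply, mulVec, dotProduct]
    using congrFun (hb j σ) i

theorem IsMatrixCocycle.exists_eq_mul_map_inv (hξ : IsMatrixCocycle ξ) :
    ∃ η : GL ι L, ∀ σ : L ≃ₐ[k] L,
      (ξ σ : Matrix ι ι L) = (η : Matrix ι ι L) * ((η : Matrix ι ι L).map σ)⁻¹ := by
  obtain ⟨η, hη⟩ := hξ.exists_mul_map_eq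
  refine ⟨η, fun σ => ?_⟩
  have hunit : IsUnit ((η : Matrix ι ι L).map σ).det :=
    (isUnit_iff_isUnit_det _).mp (η.isUnit.map (σ : L →+* L).mapMatrix)
  simpa only [hη σ] using (mul_nonsing_inv_cancel_right _ (ξ σ : Matrix ι ι L) hunit).symm

end

theorem hilbert90_GLn_general
    (k L : Type*) [Field k] [Field L] [Algebra k L]
    [FiniteDimensional k L]
    (n : ℕ)
    (ξ : (L ≃ₐ[k] L) → GL (Fin n) L)
    (hξ : ∀ σ τ : L ≃ₐ[k] L,
      (ξ (σ * τ) : Matrix (Fin n) (Fin n) L) =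
        (ξ σ : Matrix (Fin n) (Fin n) L) * ((ξ τ : Matrix (Fin n) (Fin n) L)).map σ) :
    ∃ η : GL (Fin n) L, ∀ σ : L ≃ₐ[k] L,
      (ξ σ : Matrix (Fin n) (Fin n) L) =
        (η : Matrix (Fin n) (Fin n) L) * ((η : Matrix (Fin n) (Fin n) L).map σ)⁻¹ :=
  IsMatrixCocycle.exists_eq_mul_map_inv hξ

/-- noncommutative Hilbert 90: every cocycle
`ξ : Gal(L/k) → GL_n(L)` with `ξ(στ) = ξ(σ)·σ(ξ(τ))` is a coboundary:
there is `η ∈ GL_n(L)` with `ξ(σ) = η · σ(η)⁻¹`. -/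
theorem hilbert90_GLn
    (k L : Type*) [Field k] [Field L] [Algebra k L]
    [FiniteDimensional k L] [IsGalois k L]
    (n : ℕ) (hn : 1 ≤ n)
    (ξ : (L ≃ₐ[k] L) → GL (Fin n) L)
    (hξ : ∀ σ τ : L ≃ₐ[k] L,
      (ξ (σ * τ) : Matrix (Fin n) (Fin n) L) =
        (ξ σ : Matrix (Fin n) (Fin n) L) * ((ξ τ : Matrix (Fin n) (Fin n) L)).map σ) :
    ∃ η : GL (Fin n) L, ∀ σ : L ≃ₐ[k] L,
      (ξ σ : Matrix (Fin n) (Fin n) L) =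
        (η : Matrix (Fin n) (Fin n) L) * ((η : Matrix (Fin n) (Fin n) L).map σ)⁻¹ :=
  hilbert90_GLn_general k L n ξ hξ
end

section
/- Let L/k be a finite Galois field extension with Galois group G = Gal(L/k) and let n ≥ 1. Suppose ξ : G → GL_n(L) is a map satisfying ξ(σ·τ) = σ(ξ(τ)) · ξ(σ) for all σ, τ ∈ G, where σ acts entrywise on matrices. Consider the twisted action of G on Lⁿ given by ρ_ξ(σ)(v) = ξ(σ)⁻¹ · σ(v) (with σ acting coordinatewise on v). Then the set V = { v ∈ Lⁿ : ρ_ξ(σ)(v) = v for all σ ∈ G } is a k-subspace of Lⁿ whose dimension over k equals n. -/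
open Matrix

/-!
The twisted action `v ↦ ξ(σ)⁻¹ σ(v)` is an action of `G` on `Lⁿ` by the cocycle identity, and it is
`σ`-semilinear. For any such semilinear action on a finite-dimensional `L`-space `W`, the invariants
`V` span `W` over `L`: a functional vanishing on `V` kills every norm `∑ σ, σ(a) ρ(σ) v`, so by
Dedekind's independence of characters it kills every `v`. An `L`-basis of `W` chosen inside `V`
then has Galois-fixed coordinates on `V`, i.e. coordinates in `k`, so it is also a `k`-basis of
`V`, and `dim_k V = dim_L W`.
-/

theorem AlgEquiv.comp_mulVec {k L ι : Type*} [Field k] [Field L] [Algebra k L] [Fintype ι]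
    (σ : L ≃ₐ[k] L) (A : Matrix ι ι L) (v : ι → L) :
    σ ∘ (A *ᵥ v) = A.map σ *ᵥ (σ ∘ v) :=
  funext (RingHom.map_mulVec (σ : L →+* L) A v)

namespace GaloisDescent

open Module

section Semilinear

variable {k L W : Type*} [Field k] [Field L] [Algebra k L]
  [AddCommGroup W] [Module L W] [Module k W]

def IsSemilinear (ρ : Representation k (L ≃ₐ[k] L) W) : Prop :=
  ∀ σ (a : L) (v : W), ρ σ (a • v) = σ a • ρ σ v

theorem eq_zero_of_forall_sum_mul_apply_eq_zero [FiniteDimensional k L]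
    (c : (L ≃ₐ[k] L) → L) (hc : ∀ a : L, ∑ σ, c σ * σ a = 0) : c = 0 := by
  have hli : LinearIndependent L (fun σ : L ≃ₐ[k] L => ((σ : L →* L) : L → L)) :=
    (linearIndependent_monoidHom L L).comp _
      fun _ _ h => AlgEquiv.ext (DFunLike.congr_fun h :)
  exact funext <| Fintype.linearIndependent_iff.1 hli c (funext fun a => by simpa using hc a)

theorem span_invariants_eq_top [FiniteDimensional k L] {ρ : Representation k (L ≃ₐ[k] L) W}
    (hρ : IsSemilinear ρ) : Submodule.span L (ρ.invariants : Set W) = ⊤ := by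
  by_contra hne
  obtain ⟨f, hf0, hf⟩ :=
    Submodule.exists_dual_map_eq_bot_of_lt_top (lt_top_iff_ne_top.2 hne) inferInstance
  have hf_invariants : ∀ w ∈ ρ.invariants, f w = 0 := fun w hw =>
    (Submodule.mem_bot L).1 (hf ▸ Submodule.mem_map_of_mem (Submodule.subset_span hw))
  have hf_orbit : ∀ v σ, f (ρ σ v) = 0 := fun v => congrFun <|
    eq_zero_of_forall_sum_mul_apply_eq_zero _ fun a => by
      have hnorm := hf_invariants _ fun g => ρ.self_norm_apply g (a • v)
      simpa [Representation.norm, hρ _ a v, mul_comm] using hnorm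
  exact hf0 (LinearMap.ext fun v => by simpa using hf_orbit v 1)

theorem apply_repr_of_mem_invariants {ι : Type*} [Fintype ι]
    {ρ : Representation k (L ≃ₐ[k] L) W}
    (hρ : IsSemilinear ρ) (b : Basis ι L W) (hb : ∀ i, b i ∈ ρ.invariants) {w : W}
    (hw : w ∈ ρ.invariants) (σ : L ≃ₐ[k] L) (i : ι) : σ (b.repr w i) = b.repr w i := by
  have hσw : ∑ j, σ (b.repr w j) • b j = w := calc
    _ = ρ σ (∑ j, b.repr w j • b j) := by
      rw [map_sum]
      exact Finset.sum_congr rfl fun j _ => by rw [hρ, hb j σ]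
    _ = w := by rw [b.sum_repr, hw σ]
  conv_rhs => rw [← hσw]
  rw [b.repr_sum_self]

variable [IsScalarTower k L W] [FiniteDimensional k L] [IsGalois k L]

theorem invariants_eq_span_basis {ι : Type*} [Fintype ι] {ρ : Representation k (L ≃ₐ[k] L) W}
    (hρ : IsSemilinear ρ) (b : Basis ι L W) (hb : ∀ i, b i ∈ ρ.invariants) :
    ρ.invariants = Submodule.span k (Set.range b) := by
  refine le_antisymm (fun w hw => ?_) (Submodule.span_le.2 (Set.range_subset_iff.2 hb))
  choose r hr using fun i =>
    (IsGalois.mem_range_algebraMap_iff_fixed (b.repr w i)).2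
      (apply_repr_of_mem_invariants hρ b hb hw · i)
  rw [← b.sum_repr w]
  refine Submodule.sum_mem _ fun i _ => ?_
  rw [← hr i, algebraMap_smul]
  exact Submodule.smul_mem _ _ (Submodule.subset_span ⟨i, rfl⟩)

theorem finrank_invariants [FiniteDimensional L W] {ρ : Representation k (L ≃ₐ[k] L) W}
    (hρ : IsSemilinear ρ) : finrank k ρ.invariants = finrank L W := by
  let b := Basis.ofSpan (span_invariants_eq_top hρ).ge
  have : Fintype _ := FiniteDimensional.fintypeBasisIndex b
  rw [invariants_eq_span_basis hρ b fun i => Basis.ofSpan_subset _ ⟨i, rfl⟩,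
    finrank_span_eq_card (b.linearIndependent.restrict_scalars' k), finrank_eq_card_basis b]

end Semilinear

section TwistedAction

variable {k L ι : Type*} [Field k] [Field L] [Algebra k L] [Fintype ι] [DecidableEq ι]
  {ξ : (L ≃ₐ[k] L) → GL ι L}

def twistedMap (ξ : (L ≃ₐ[k] L) → GL ι L) (σ : L ≃ₐ[k] L) : (ι → L) →ₗ[k] (ι → L) :=
  (((ξ σ)⁻¹ : GL ι L) : Matrix ι ι L).mulVecLin.restrictScalars k ∘ₗ σ.toLinearMap.compLeft ι

theorem twistedMap_apply (σ : L ≃ₐ[k] L) (v : ι → L) :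
    twistedMap ξ σ v = (((ξ σ)⁻¹ : GL ι L) : Matrix ι ι L) *ᵥ (σ ∘ v) :=
  rfl

variable (hξ : ∀ σ τ : L ≃ₐ[k] L,
  (ξ (σ * τ) : Matrix ι ι L) = (ξ τ : Matrix ι ι L).map σ * (ξ σ : Matrix ι ι L))
include hξ

theorem cocycle_one : ξ 1 = 1 := by
  have h := hξ 1 1
  rw [mul_one] at h
  have h' : ξ 1 = ξ 1 * ξ 1 := Units.ext (h.trans (congrArg (· * _) (map_id' _)))
  simpa using h'

theorem cocycle_inv_mul (σ τ : L ≃ₐ[k] L) :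
    (((ξ (σ * τ))⁻¹ : GL ι L) : Matrix ι ι L) =
      ((ξ σ)⁻¹ : GL ι L) * (((ξ τ)⁻¹ : GL ι L) : Matrix ι ι L).map σ := by
  have h : ξ (σ * τ) = GeneralLinearGroup.map (σ : L →+* L) (ξ τ) * ξ σ :=
    Units.ext (hξ σ τ)
  rw [h, _root_.mul_inv_rev, ← map_inv]
  rfl

def twistedRep : Representation k (L ≃ₐ[k] L) (ι → L) where
  toFun := twistedMap ξ
  map_one' := LinearMap.ext fun v => by
    simp [twistedMap_apply, cocycle_one hξ, Function.comp_def]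
  map_mul' σ τ := LinearMap.ext fun v => by
    rw [Module.End.mul_apply, twistedMap_apply, twistedMap_apply, twistedMap_apply,
      AlgEquiv.comp_mulVec, mulVec_mulVec, cocycle_inv_mul hξ]
    rfl

theorem twistedRep_apply (σ : L ≃ₐ[k] L) (v : ι → L) :
    twistedRep hξ σ v = (((ξ σ)⁻¹ : GL ι L) : Matrix ι ι L) *ᵥ (σ ∘ v) :=
  rfl

theorem isSemilinear_twistedRep : IsSemilinear (twistedRep hξ) := fun σ a v => by
  rw [twistedRep_apply, twistedRep_apply, ← mulVec_smul]
  congr 1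
  ext i
  simp

end TwistedAction

end GaloisDescent

open GaloisDescent in
theorem twisted_fixed_space_has_dimension_n_general
    (k L : Type*) [Field k] [Field L] [Algebra k L]
    [FiniteDimensional k L] [IsGalois k L]
    (n : ℕ)
    (ξ : (L ≃ₐ[k] L) → GL (Fin n) L)
    (hξ : ∀ σ τ : L ≃ₐ[k] L,
      (ξ (σ * τ) : Matrix (Fin n) (Fin n) L) =
        ((ξ τ : Matrix (Fin n) (Fin n) L)).map σ * (ξ σ : Matrix (Fin n) (Fin n) L)) :
    ∃ V : Submodule k (Fin n → L),
      (V : Set (Fin n → L)) =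
        {v : Fin n → L | ∀ σ : L ≃ₐ[k] L,
          ((ξ σ)⁻¹ : GL (Fin n) L) *ᵥ (fun i => σ (v i)) = v} ∧
      Module.finrank k V = n :=
  ⟨(twistedRep hξ).invariants, rfl, by
    rw [finrank_invariants (isSemilinear_twistedRep hξ), Module.finrank_fin_fun]⟩

/-- The fixed space of the twisted Galois action
`ρ_ξ(σ)(v) = ξ(σ)⁻¹ · σ(v)` on `Lⁿ` is a `k`-subspace of dimension `n` over `k`. -/
theorem twisted_fixed_space_has_dimension_n
    (k L : Type*) [Field k] [Field L] [Algebra k L]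
    [FiniteDimensional k L] [IsGalois k L]
    (n : ℕ) (hn : 1 ≤ n)
    (ξ : (L ≃ₐ[k] L) → GL (Fin n) L)
    (hξ : ∀ σ τ : L ≃ₐ[k] L,
      (ξ (σ * τ) : Matrix (Fin n) (Fin n) L) =
        ((ξ τ : Matrix (Fin n) (Fin n) L)).map σ * (ξ σ : Matrix (Fin n) (Fin n) L)) :
    ∃ V : Submodule k (Fin n → L),
      (V : Set (Fin n → L)) =
        {v : Fin n → L | ∀ σ : L ≃ₐ[k] L,
          ((ξ σ)⁻¹ : GL (Fin n) L) *ᵥ (fun i => σ (v i)) = v} ∧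
      Module.finrank k V = n :=
  twisted_fixed_space_has_dimension_n_general k L n ξ hξ
end

section
/- Let p be a prime, r ≥ 1, q = p^r, let k be a number field with a fixed algebraic closure, let ζ be a primitive q-th root of unity, and set K = k(ζ). Assume [K : k] = p^{r-1}(p-1). Let L be a finite Galois extension of k containing K such that: Gal(L/K) is cyclic of order q; [L : k] = q · p^{r-1}(p-1); for every τ ∈ Gal(L/k) and every σ ∈ Gal(L/K) one has τ ∘ σ ∘ τ⁻¹ = σ^b, where b is an integer with τ(ζ) = ζ^b; and Gal(L/K) admits a complement in Gal(L/k) (a subgroup H with H ∩ Gal(L/K) = {1} and |H| = p^{r-1}(p-1)). Then there exist an algebraic integer m in the ring of integers O_k of k which is not a p-th power in k, and an element α ∈ L with α^q = m, such that L = K(α). -/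
/-!
By Kummer theory over `K`, a generator `σ` of `Gal(L/K)` has an eigenvector `α₀ ≠ 0` with
eigenvalue `ζ`. The conjugation hypothesis says that every `τ ∈ Gal(L/k)` preserves this
eigenline, so each resolvent `β = ∑_{h ∈ H} h (c α₀)` with `c ∈ K` is again a `ζ`-eigenvector,
now also fixed by the complement `H`. Since `H` acts faithfully on `K`, Dedekind's independence
of characters gives a `c` with `β ≠ 0`. Then `β ^ q` is fixed by `⟨σ⟩ H = Gal(L/k)`, hence lies
in `k`, and clearing denominators gives `m ∈ 𝓞 k`. An eigenvector generates `L` over `K`,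
because no nontrivial power of `σ` fixes it; and if `m` were a `p`-th power `c ^ p`, then
`α ^ (q / p) / c` would be a `p`-th root of unity, hence fixed by `σ`, yet multiplied by
`ζ ^ (q / p) ≠ 1`.
-/

open NumberField IntermediateField Module

namespace AlgEquiv

section

variable {F L : Type*} [Field F] [Field L] [Algebra F L]

theorem pow_apply_eq_pow_mul {σ : L ≃ₐ[F] L} {η x : L} (hη : σ η = η) (hx : σ x = η * x) :
    ∀ t : ℕ, (σ ^ t) x = η ^ t * x
  | 0 => by simp
  | t + 1 => by
    rw [pow_succ', mul_apply, pow_apply_eq_pow_mul hη hx t, map_mul, map_pow, hη, hx]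
    ring

theorem apply_apply_eq_mul_of_conj_eq_zpow {σ : L ≃ₐ[F] L} {η : L} {n : ℕ} [NeZero n]
    (hη : IsPrimitiveRoot η n) (hση : σ η = η)
    (hconj : ∀ τ : L ≃ₐ[F] L, ∀ b : ℤ, τ η = η ^ b → τ * σ * τ⁻¹ = σ ^ b)
    (τ : L ≃ₐ[F] L) {x : L} (hx : σ x = η * x) : σ (τ x) = η * τ x := by
  obtain ⟨b, -, hb⟩ :=
    hη.eq_pow_of_pow_eq_one (ξ := τ⁻¹ η) (by rw [← map_pow, hη.pow_eq_one, map_one])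
  have hτσ : τ⁻¹ * σ * τ = σ ^ b := by simpa using hconj τ⁻¹ b (by rw [zpow_natCast, hb])
  apply τ⁻¹.injective
  calc τ⁻¹ (σ (τ x)) = (τ⁻¹ * σ * τ) x := rfl
    _ = η ^ b * x := by rw [hτσ, pow_apply_eq_pow_mul hση hx]
    _ = τ⁻¹ (η * τ x) := by rw [map_mul, ← hb, ← mul_apply, inv_mul_cancel, one_apply]

theorem apply_sum_subgroup {H : Subgroup (L ≃ₐ[F] L)} [Fintype H] {g : L ≃ₐ[F] L} (hg : g ∈ H)
    (x : L) : g (∑ h : H, (h : L ≃ₐ[F] L) x) = ∑ h : H, (h : L ≃ₐ[F] L) x := by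
  rw [map_sum]
  exact Fintype.sum_equiv (Equiv.mulLeft ⟨g, hg⟩) _ _ fun h => rfl

theorem pow_ne_algebraMap_pow {σ : L ≃ₐ[F] L} {ζ α : L} {n d : ℕ} [NeZero n]
    (hζ : IsPrimitiveRoot ζ n) (hdn : d ∣ n) (hd : 1 < d) (hσζ : σ ζ = ζ) (hα0 : α ≠ 0)
    (hα : σ α = ζ * α) (c : F) : α ^ n ≠ algebraMap F L c ^ d := by
  obtain ⟨e, rfl⟩ := hdn
  intro h
  have : NeZero d := ⟨by omega⟩
  have hε : IsPrimitiveRoot (ζ ^ e) d := hζ.pow (NeZero.pos _) (mul_comm d e)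
  have hc : algebraMap F L c ≠ 0 := by
    rintro hc
    rw [hc, zero_pow (by omega)] at h
    exact pow_ne_zero _ hα0 h
  set ω := α ^ e / algebraMap F L c
  have hω : ω ^ d = 1 := by
    rw [div_pow, ← pow_mul, mul_comm e, h, div_self (pow_ne_zero _ hc)]
  obtain ⟨i, -, hi⟩ := hε.eq_pow_of_pow_eq_one hω
  have hσω : σ ω = ζ ^ e * ω := by
    rw [map_div₀, map_pow, hα, commutes, mul_pow, mul_div_assoc]
  have hω0 : ω ≠ 0 := div_ne_zero (pow_ne_zero _ hα0) hc
  refine hε.ne_one hd (mul_right_cancel₀ hω0 ?_)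
  rw [← hσω, one_mul, ← hi, map_pow, map_pow, hσζ]

end

section Tower

variable (k K L : Type*) [Field k] [Field K] [Field L] [Algebra k K] [Algebra K L] [Algebra k L]
  [IsScalarTower k K L]

theorem range_restrictScalarsHom :
    (restrictScalarsHom k : (L ≃ₐ[K] L) →* (L ≃ₐ[k] L)).range =
      (IsScalarTower.toAlgHom k K L).fieldRange.fixingSubgroup := by
  ext g
  constructor
  · rintro ⟨g, rfl⟩
    exact (mem_fixingSubgroup_iff _ _).mpr fun _ ⟨x, hx⟩ => hx ▸ g.commutes x
  · intro hg
    exact ⟨{ g with commutes' := fun x => (mem_fixingSubgroup_iff _ _).mp hg _ ⟨x, rfl⟩ }, rfl⟩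

noncomputable def restrictScalarsFixingSubgroupEquiv :
    (L ≃ₐ[K] L) ≃* (IsScalarTower.toAlgHom k K L).fieldRange.fixingSubgroup :=
  (MonoidHom.ofInjective (restrictScalarsHom_injective k)).trans
    (MulEquiv.subgroupCongr (range_restrictScalarsHom k K L))

theorem finrank_eq_card_fixingSubgroup [FiniteDimensional K L] [IsGalois K L] :
    finrank K L = Nat.card (IsScalarTower.toAlgHom k K L).fieldRange.fixingSubgroup := by
  rw [← IsGalois.card_aut_eq_finrank]
  exact Nat.card_congr (restrictScalarsFixingSubgroupEquiv k K L).toEquiv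

theorem isCyclic_of_isCyclic_fixingSubgroup
    [IsCyclic (IsScalarTower.toAlgHom k K L).fieldRange.fixingSubgroup] : IsCyclic (L ≃ₐ[K] L) :=
  isCyclic_of_surjective _ (restrictScalarsFixingSubgroupEquiv k K L).symm.surjective

variable {k K L}

theorem zpowers_restrictScalars_eq_fixingSubgroup {σ : L ≃ₐ[K] L}
    (hσ : ∀ g, g ∈ Subgroup.zpowers σ) :
    Subgroup.zpowers (σ.restrictScalars k) =
      (IsScalarTower.toAlgHom k K L).fieldRange.fixingSubgroup := by
  rw [← range_restrictScalarsHom, MonoidHom.range_eq_map, ← (Subgroup.eq_top_iff' _).mpr hσ,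
    MonoidHom.map_zpowers]
  rfl

end Tower

end AlgEquiv

section Galois

variable {K L : Type*} [Field K] [Field L] [Algebra K L]

theorem AlgEquiv.exists_ne_zero_apply_eq_mul [FiniteDimensional K L] (σ : L ≃ₐ[K] L) {ζ : K}
    (hζ : ζ ^ orderOf σ = 1) : ∃ v : L, v ≠ 0 ∧ σ v = algebraMap K L ζ * v := by
  have hroot : (minpoly K σ.toLinearMap).IsRoot ζ := by
    simpa [minpoly_algEquiv_toLinearMap σ (isOfFinOrder_of_finite σ), sub_eq_zero] using hζ
  obtain ⟨v, hv⟩ := (Module.End.hasEigenvalue_of_isRoot hroot).exists_hasEigenvector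
  exact ⟨v, hv.2, by rw [← Algebra.smul_def]; exact hv.apply_eq_smul⟩

theorem adjoin_simple_eq_top_of_apply_eq_mul [FiniteDimensional K L] [IsGalois K L]
    {σ : L ≃ₐ[K] L} (hσ : ∀ g, g ∈ Subgroup.zpowers σ) {ζ : K}
    (hζ : IsPrimitiveRoot ζ (finrank K L)) {v : L} (hv0 : v ≠ 0)
    (hv : σ v = algebraMap K L ζ * v) : K⟮v⟯ = ⊤ := by
  have hσord : orderOf σ = finrank K L := by
    rw [orderOf_eq_card_of_forall_mem_zpowers hσ, IsGalois.card_aut_eq_finrank]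
  suffices K⟮v⟯.fixingSubgroup = ⊥ by
    rw [← IsGalois.fixedField_fixingSubgroup K⟮v⟯, this, fixedField_bot]
  refine (Subgroup.eq_bot_iff_forall _).mpr fun g hg => ?_
  obtain ⟨n, rfl⟩ := mem_powers_iff_mem_zpowers.mpr (hσ g)
  have hfix : (σ ^ n) v = v := (mem_fixingSubgroup_iff _ _).mp hg v (mem_adjoin_simple_self K v)
  rw [AlgEquiv.pow_apply_eq_pow_mul (σ.commutes ζ) hv, ← map_pow] at hfix
  have hζn : ζ ^ n = 1 := (algebraMap K L).injective <| by
    rw [map_one]; exact mul_right_cancel₀ hv0 (by rw [hfix, one_mul])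
  exact orderOf_dvd_iff_pow_eq_one.mp (hσord ▸ hζ.dvd_of_pow_eq_one n hζn)

theorem exists_mem_sum_apply_mul_ne_zero {H : Subgroup (L ≃ₐ[K] L)} [Fintype H]
    {E : IntermediateField K L} (hHE : H ⊓ E.fixingSubgroup = ⊥) {x : L} (hx : x ≠ 0) :
    ∃ c ∈ E, ∑ h : H, (h : L ≃ₐ[K] L) (c * x) ≠ 0 := by
  let restrict : H → (E →ₐ[K] L) := fun h => ((h : L ≃ₐ[K] L) : L →ₐ[K] L).comp E.val
  have hrestrict : Function.Injective restrict := by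
    intro h h' hhh
    have hmem : (h' : L ≃ₐ[K] L)⁻¹ * h ∈ H ⊓ E.fixingSubgroup := by
      refine ⟨H.mul_mem (H.inv_mem h'.2) h.2, (mem_fixingSubgroup_iff _ _).mpr fun c hc => ?_⟩
      have hc : (h : L ≃ₐ[K] L) c = (h' : L ≃ₐ[K] L) c := DFunLike.congr_fun hhh ⟨c, hc⟩
      rw [AlgEquiv.mul_apply, hc, ← AlgEquiv.mul_apply, inv_mul_cancel, AlgEquiv.one_apply]
    rw [hHE, Subgroup.mem_bot, inv_mul_eq_one] at hmem
    exact Subtype.ext hmem.symm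
  by_contra! hsum
  have hli := Fintype.linearIndependent_iff.mp
    ((linearIndependent_algHom_toLinearMap K E L).comp restrict hrestrict)
    (fun h => (h : L ≃ₐ[K] L) x) (LinearMap.ext fun c => ?_) 1
  · exact hx (by simpa using hli)
  · simpa [restrict, mul_comm] using hsum c c.2

theorem exists_ne_zero_apply_eq_mul_forall_mem_apply_eq {σ : L ≃ₐ[K] L} {η : L}
    {E : IntermediateField K L} {H : Subgroup (L ≃ₐ[K] L)} [Fintype H]
    (hσE : σ ∈ E.fixingSubgroup) (hHE : H ⊓ E.fixingSubgroup = ⊥)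
    (hpres : ∀ τ : L ≃ₐ[K] L, ∀ x, σ x = η * x → σ (τ x) = η * τ x)
    {x : L} (hx0 : x ≠ 0) (hx : σ x = η * x) :
    ∃ β : L, β ≠ 0 ∧ σ β = η * β ∧ ∀ h ∈ H, h β = β := by
  obtain ⟨c, hcE, hc⟩ := exists_mem_sum_apply_mul_ne_zero hHE hx0
  refine ⟨_, hc, ?_, fun h hh => AlgEquiv.apply_sum_subgroup hh _⟩
  rw [map_sum, Finset.mul_sum]
  refine Finset.sum_congr rfl fun h _ => hpres h _ ?_
  rw [map_mul, (mem_fixingSubgroup_iff _ _).mp hσE c hcE, hx, mul_left_comm]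

theorem pow_mem_bot_of_apply_eq_mul [FiniteDimensional K L] [IsGalois K L] {σ : L ≃ₐ[K] L}
    {H : Subgroup (L ≃ₐ[K] L)} (hσH : Subgroup.zpowers σ ⊔ H = ⊤) {η β : L} {n : ℕ}
    (hη : η ^ n = 1) (hβ : σ β = η * β) (hHβ : ∀ h ∈ H, h β = β) :
    β ^ n ∈ (⊥ : IntermediateField K L) := by
  have hstab : Subgroup.zpowers σ ⊔ H ≤ MulAction.stabilizer (L ≃ₐ[K] L) (β ^ n) := by
    refine sup_le (Subgroup.zpowers_le.mpr ?_) fun h hh => ?_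
    · change σ (β ^ n) = β ^ n
      rw [map_pow, hβ, mul_pow, hη, one_mul]
    · change h (β ^ n) = β ^ n
      rw [map_pow, hHβ h hh]
  exact (IsGalois.mem_bot_iff_fixed _).mpr fun g => hstab (hσH ▸ Subgroup.mem_top g)

end Galois

theorem NumberField.exists_pow_mul_eq_algebraMap (k : Type*) [Field k] [NumberField k] (a : k)
    {n : ℕ} (hn : n ≠ 0) : ∃ s : k, s ≠ 0 ∧ ∃ m : 𝓞 k, s ^ n * a = algebraMap (𝓞 k) k m := by
  obtain ⟨⟨num, den⟩, h⟩ := IsLocalization.surj (nonZeroDivisors (𝓞 k)) a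
  refine ⟨algebraMap (𝓞 k) k den, ?_, den ^ (n - 1) * num, ?_⟩
  · exact IsFractionRing.to_map_ne_zero_of_mem_nonZeroDivisors den.2
  · obtain ⟨n, rfl⟩ := Nat.exists_eq_succ_of_ne_zero hn
    simp only [map_mul, map_pow, ← h, Nat.succ_sub_one, pow_succ]
    ring

theorem exists_radical_generator_of_apply_eq_mul {k K L : Type*} [Field k] [NumberField k]
    [Field K] [Field L] [Algebra k K] [Algebra K L] [Algebra k L] [IsScalarTower k K L]
    [FiniteDimensional K L] [IsGalois K L] {p n : ℕ} (hp : p.Prime) (hpn : p ∣ n)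
    {σ : L ≃ₐ[K] L} (hσ : ∀ g, g ∈ Subgroup.zpowers σ) {ζ : K} (hζ : IsPrimitiveRoot ζ n)
    (hKL : finrank K L = n) {β : L} (hβ0 : β ≠ 0) (hβ : σ β = algebraMap K L ζ * β)
    {a : k} (ha : β ^ n = algebraMap k L a) :
    ∃ (m : 𝓞 k) (α : L), (¬ ∃ c : k, algebraMap (𝓞 k) k m = c ^ p) ∧
      α ^ n = algebraMap k L (algebraMap (𝓞 k) k m) ∧ K⟮α⟯ = ⊤ := by
  have : NeZero n := ⟨hKL ▸ finrank_pos.ne'⟩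
  obtain ⟨s, hs0, m, hm⟩ := NumberField.exists_pow_mul_eq_algebraMap k a (NeZero.ne n)
  set α := algebraMap k L s * β
  have hα0 : α ≠ 0 := mul_ne_zero ((map_ne_zero _).mpr hs0) hβ0
  have hα : σ α = algebraMap K L ζ * α := by
    rw [map_mul, show σ (algebraMap k L s) = _ from (σ.restrictScalars k).commutes s, hβ]
    ring
  have hαm : α ^ n = algebraMap k L (algebraMap (𝓞 k) k m) := by
    rw [mul_pow, ha, ← map_pow, ← map_mul, hm]
  refine ⟨m, α, fun ⟨c, hc⟩ => ?_, hαm, adjoin_simple_eq_top_of_apply_eq_mul hσ (hKL ▸ hζ) hα0 hα⟩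
  exact AlgEquiv.pow_ne_algebraMap_pow (σ := σ.restrictScalars k)
    (hζ.map_of_injective (algebraMap K L).injective) hpn hp.one_lt (σ.commutes ζ) hα0 hα c
    (by rw [hαm, hc, map_pow])

theorem splitting_field_is_radical_general
    (p : ℕ) (hp : p.Prime) (r : ℕ) (hr : 1 ≤ r) (q : ℕ) (hq : q = p ^ r)
    (k K L : Type*) [Field k] [NumberField k] [Field K] [Field L]
    [Algebra k K] [Algebra K L] [Algebra k L] [IsScalarTower k K L]
    [IsGalois k L] [FiniteDimensional k L]
    (ζ : K) (hζ : IsPrimitiveRoot ζ q)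
    (N : Subgroup (L ≃ₐ[k] L))
    (hN : N = IntermediateField.fixingSubgroup ((IsScalarTower.toAlgHom k K L).fieldRange))
    (hNcyc : IsCyclic N) (hNcard : Nat.card N = q)
    (hLdeg : finrank k L = q * (p ^ (r - 1) * (p - 1)))
    (hconj : ∀ τ : L ≃ₐ[k] L, ∀ σ ∈ N, ∀ b : ℤ,
      τ (algebraMap K L ζ) = (algebraMap K L ζ) ^ b → τ * σ * τ⁻¹ = σ ^ b)
    (hcompl : ∃ H : Subgroup (L ≃ₐ[k] L),
      H ⊓ N = ⊥ ∧ Nat.card H = p ^ (r - 1) * (p - 1)) :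
    ∃ (m : 𝓞 k) (α : L),
      (¬ ∃ c : k, (algebraMap (𝓞 k) k m) = c ^ p) ∧
      α ^ q = algebraMap k L (algebraMap (𝓞 k) k m) ∧
      IntermediateField.adjoin K {α} = (⊤ : IntermediateField K L) := by
  classical
  obtain ⟨H, hHN, hHcard⟩ := hcompl
  subst hN hq
  have : FiniteDimensional K L := .right k K L
  have : IsGalois K L := .tower_top_of_isGalois k K L
  have : IsCyclic (L ≃ₐ[K] L) := AlgEquiv.isCyclic_of_isCyclic_fixingSubgroup k K L
  have hKL : finrank K L = p ^ r := (AlgEquiv.finrank_eq_card_fixingSubgroup k K L).trans hNcard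
  obtain ⟨σ, hσ⟩ := IsCyclic.exists_generator (α := L ≃ₐ[K] L)
  have hNσ := AlgEquiv.zpowers_restrictScalars_eq_fixingSubgroup (k := k) hσ
  have hσN := hNσ ▸ Subgroup.mem_zpowers (σ.restrictScalars k)
  have hNH : Subgroup.zpowers (σ.restrictScalars k) ⊔ H = ⊤ :=
    hNσ ▸ (Subgroup.isComplement'_of_card_mul_and_disjoint
      (by rw [hNcard, hHcard, IsGalois.card_aut_eq_finrank, hLdeg])
      (disjoint_iff.mpr (inf_comm H _ ▸ hHN))).sup_eq_top
  have : NeZero (p ^ r) := ⟨pow_ne_zero r hp.ne_zero⟩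
  have hζL := hζ.map_of_injective (algebraMap K L).injective
  obtain ⟨α₀, hα₀0, hα₀⟩ := σ.exists_ne_zero_apply_eq_mul (ζ := ζ) (by
    rw [orderOf_eq_card_of_forall_mem_zpowers hσ, IsGalois.card_aut_eq_finrank, hKL,
      hζ.pow_eq_one])
  have hpres := AlgEquiv.apply_apply_eq_mul_of_conj_eq_zpow (σ := σ.restrictScalars k) hζL
    (σ.commutes ζ) fun τ => hconj τ _ hσN
  obtain ⟨β, hβ0, hβ, hHβ⟩ :=
    exists_ne_zero_apply_eq_mul_forall_mem_apply_eq hσN hHN hpres hα₀0 hα₀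
  obtain ⟨a, ha⟩ := mem_bot.mp (pow_mem_bot_of_apply_eq_mul hNH hζL.pow_eq_one hβ hHβ)
  exact exists_radical_generator_of_apply_eq_mul hp (dvd_pow_self p (by omega)) hσ hζ hKL hβ0 hβ
    ha.symm

/-- If `L/k` is finite Galois containing `K = k(ζ_q)` (of full degree
`p^{r-1}(p-1)` over the number field `k`), with `Gal(L/K)` cyclic of order `q`,
`[L:k] = q·p^{r-1}(p-1)`, conjugation by any `τ ∈ Gal(L/k)` acting on `Gal(L/K)` as
`σ ↦ σ^b` where `τ(ζ) = ζ^b`, and `Gal(L/K)` admitting a complement in `Gal(L/k)`,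
then `L = K(α)` for some `α` with `α^q = m`, where `m ∈ O_k` is an algebraic integer
that is not a `p`-th power in `k`. -/
theorem splitting_field_is_radical
    (p : ℕ) (hp : p.Prime) (r : ℕ) (hr : 1 ≤ r) (q : ℕ) (hq : q = p ^ r)
    (k K L : Type*) [Field k] [NumberField k] [Field K] [Field L]
    [Algebra k K] [Algebra K L] [Algebra k L] [IsScalarTower k K L]
    [IsGalois k L] [FiniteDimensional k L]
    (ζ : K) (hζ : IsPrimitiveRoot ζ q)
    (hKgen : IntermediateField.adjoin k {ζ} = (⊤ : IntermediateField k K))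
    (hKdeg : finrank k K = p ^ (r - 1) * (p - 1))
    (N : Subgroup (L ≃ₐ[k] L))
    (hN : N = IntermediateField.fixingSubgroup ((IsScalarTower.toAlgHom k K L).fieldRange))
    (hNcyc : IsCyclic N) (hNcard : Nat.card N = q)
    (hLdeg : finrank k L = q * (p ^ (r - 1) * (p - 1)))
    (hconj : ∀ τ : L ≃ₐ[k] L, ∀ σ ∈ N, ∀ b : ℤ,
      τ (algebraMap K L ζ) = (algebraMap K L ζ) ^ b → τ * σ * τ⁻¹ = σ ^ b)
    (hcompl : ∃ H : Subgroup (L ≃ₐ[k] L),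
      H ⊓ N = ⊥ ∧ Nat.card H = p ^ (r - 1) * (p - 1)) :
    ∃ (m : 𝓞 k) (α : L),
      (¬ ∃ c : k, (algebraMap (𝓞 k) k m) = c ^ p) ∧
      α ^ q = algebraMap k L (algebraMap (𝓞 k) k m) ∧
      IntermediateField.adjoin K {α} = (⊤ : IntermediateField K L) :=
  splitting_field_is_radical_general p hp r hr q hq k K L ζ hζ N hN hNcyc hNcard hLdeg hconj hcompl
end

section
/- Let q ≥ 1, let L be a field containing a primitive q-th root of unity ζ, and let σ be a field automorphism of L with σ(ζ) = ζ and σ^q = id. Let τ be a field automorphism of L and b an integer coprime to q such that τ(ζ) = ζ^b and τ ∘ σ ∘ τ⁻¹ = σ^b. Let α ∈ L satisfy τ(α) = α. Then for every integer i, the Lagrange resolvent u_i = Σ_{j=0}^{q-1} ζ^{i·j} · σ^{-j}(α) satisfies τ(u_i) = u_i. -/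
/-!
The summands are `F j` for `F m = ζ ^ (i * m) * σ ^ (-m) α`, a `q`-periodic function on `ℤ`,
and `τ (F m) = F (b * m)`. As `b` is a unit mod `q`, `m ↦ b * m` permutes the residues mod `q`,
so `τ` merely permutes the summands.
-/

open Finset Function

theorem Function.Periodic.apply_val_intCast {M : Type*} {f : ℤ → M} {q : ℕ} [NeZero q]
    (hf : Periodic f q) (m : ℤ) : f (m : ZMod q).val = f m := by
  rw [ZMod.val_intCast, Int.emod_def, mul_comm]
  exact hf.sub_int_mul_eq (m / q)

theorem ZMod.sum_range_natCast {M : Type*} [AddCommMonoid M] (q : ℕ) [NeZero q]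
    (g : ZMod q → M) : ∑ j ∈ range q, g j = ∑ x : ZMod q, g x :=
  sum_nbij' (↑) ZMod.val (by simp) (fun x _ => mem_range.2 x.val_lt)
    (fun j hj => ZMod.val_cast_of_lt (mem_range.1 hj)) (fun x _ => ZMod.natCast_zmod_val x)
    (fun _ _ => rfl)

theorem Function.Periodic.sum_range_comp_mul {M : Type*} [AddCommMonoid M] {f : ℤ → M} {q : ℕ}
    (hf : Periodic f q) {b : ℤ} (hb : IsCoprime b q) :
    ∑ j ∈ range q, f (b * j) = ∑ j ∈ range q, f j := by
  obtain rfl | hq := eq_or_ne q 0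
  · simp
  have : NeZero q := ⟨hq⟩
  let g (x : ZMod q) : M := f x.val
  have hfg (m : ℤ) : f m = g m := (hf.apply_val_intCast m).symm
  calc ∑ j ∈ range q, f (b * j)
      = ∑ x : ZMod q, g (ZMod.unitOfIsCoprime b hb * x) := by
        simp only [hfg, Int.cast_mul, Int.cast_natCast, ZMod.coe_unitOfIsCoprime]
        exact ZMod.sum_range_natCast q (fun x => g (b * x))
    _ = ∑ x : ZMod q, g x := Equiv.sum_comp (Units.mulLeft _) g
    _ = ∑ j ∈ range q, f j := by
        simp only [hfg, Int.cast_natCast]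
        exact (ZMod.sum_range_natCast q g).symm

theorem RingEquiv.apply_zpow_apply_of_conj_eq {R : Type*} [Semiring R] {σ τ : R ≃+* R} {b : ℤ}
    (hτσ : τ * σ * τ⁻¹ = σ ^ b) (n : ℤ) (x : R) : τ ((σ ^ n) x) = (σ ^ (b * n)) (τ x) := by
  have h : SemiconjBy τ σ (σ ^ b) := by rw [SemiconjBy, ← hτσ, inv_mul_cancel_right]
  rw [zpow_mul]
  exact DFunLike.congr_fun (h.zpow_right n).eq x

theorem lagrange_resolvent_fixed_by_tau_general
    (q : ℕ) (hq : 1 ≤ q) (L : Type*) [Field L]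
    (ζ : L) (hζ : IsPrimitiveRoot ζ q)
    (σ : L ≃+* L) (hσq : σ ^ q = 1)
    (τ : L ≃+* L) (b : ℤ) (hb : Int.gcd b q = 1)
    (hτζ : τ ζ = ζ ^ b) (hτσ : τ * σ * τ⁻¹ = σ ^ b)
    (α : L) (hτα : τ α = α) (i : ℤ) :
    τ (∑ j ∈ Finset.range q, ζ ^ (i * (j : ℤ)) * ((σ⁻¹) ^ j) α) =
      ∑ j ∈ Finset.range q, ζ ^ (i * (j : ℤ)) * ((σ⁻¹) ^ j) α := by
  let F (m : ℤ) : L := ζ ^ (i * m) * (σ ^ (-m)) α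
  have hF : Periodic F q := fun m => by
    have hζm : ζ ^ (i * (m + q)) = ζ ^ (i * m) := by
      rw [mul_add, zpow_add₀ (hζ.ne_zero (by omega)), mul_comm i (q : ℤ), zpow_mul ζ q,
        zpow_natCast, hζ.pow_eq_one, one_zpow, mul_one]
    have hσm : σ ^ (-(m + q)) = σ ^ (-m) := by
      rw [neg_add, zpow_add, zpow_neg σ q, zpow_natCast, hσq, inv_one, mul_one]
    simp only [F, hζm, hσm]
  have hτF (m : ℤ) : τ (F m) = F (b * m) := by
    rw [map_mul, map_zpow₀, hτζ, RingEquiv.apply_zpow_apply_of_conj_eq hτσ, hτα, ← zpow_mul,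
      mul_neg, mul_left_comm]
  have hterm (j : ℕ) : ζ ^ (i * j) * ((σ⁻¹) ^ j) α = F j := by
    rw [inv_pow, ← zpow_natCast, ← zpow_neg]
  simp only [hterm, map_sum, hτF]
  exact hF.sum_range_comp_mul (Int.isCoprime_iff_gcd_eq_one.2 hb)

/-- If `τ(ζ) = ζ^b` with `gcd(b, q) = 1`, `τστ⁻¹ = σ^b` and `τ(α) = α`,
then every Lagrange resolvent `u_i = Σ_{j=0}^{q-1} ζ^{ij} σ^{-j}(α)` is fixed by `τ`. -/
theorem lagrange_resolvent_fixed_by_tau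
    (q : ℕ) (hq : 1 ≤ q) (L : Type*) [Field L]
    (ζ : L) (hζ : IsPrimitiveRoot ζ q)
    (σ : L ≃+* L) (hσζ : σ ζ = ζ) (hσq : σ ^ q = 1)
    (τ : L ≃+* L) (b : ℤ) (hb : Int.gcd b q = 1)
    (hτζ : τ ζ = ζ ^ b) (hτσ : τ * σ * τ⁻¹ = σ ^ b)
    (α : L) (hτα : τ α = α) (i : ℤ) :
    τ (∑ j ∈ Finset.range q, ζ ^ (i * (j : ℤ)) * ((σ⁻¹) ^ j) α) =
      ∑ j ∈ Finset.range q, ζ ^ (i * (j : ℤ)) * ((σ⁻¹) ^ j) α :=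
  lagrange_resolvent_fixed_by_tau_general q hq L ζ hζ σ hσq τ b hb hτζ hτσ α hτα i
end
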